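/- Consider a two-term (split) disjunction with terms P¹, P², optimal vertices p¹, p² at which the defining bases are unique (nondegenerate), and the simple point-ray hull P_D⁰ = conv({p¹,p²}) + cone(R⁰) where R⁰ consists of the extreme ray directions of the basis cones C¹, C² at p¹, p². Then every facet-defining inequality of P_D⁰ that is tight at both p¹ and p² is facet-defining for the disjunctive hull P_D = cl conv(P¹ ∪ P²). -/

import Mathlib

open Pointwise

noncomputable section

/-- Dot product on `ℝⁿ`. -/
def dot {n : ℕ} (a x : Fin n → ℝ) : ℝ := ∑ i, a i * x i

/-- Conical (nonnegative) hull of a set of rays. -/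
def coneHull {n : ℕ} (R : Set (Fin n → ℝ)) : Set (Fin n → ℝ) :=
  {y | ∃ (s : Finset (Fin n → ℝ)) (c : (Fin n → ℝ) → ℝ),
      ↑s ⊆ R ∧ (∀ r ∈ s, 0 ≤ c r) ∧ y = ∑ r ∈ s, c r • r}

/-- The point-ray hull `conv(P) + cone(R)` (Minkowski sum). -/
def pointRayHull {n : ℕ} (P R : Set (Fin n → ℝ)) : Set (Fin n → ℝ) :=
  convexHull ℝ P + coneHull R

/-- A polyhedron: intersection of finitely many halfspaces. -/
def IsPolyhedron {n : ℕ} (S : Set (Fin n → ℝ)) : Prop :=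
  ∃ (m : ℕ) (A : Fin m → (Fin n → ℝ)) (b : Fin m → ℝ),
    S = {x | ∀ i, b i ≤ dot (A i) x}

/-- Recession cone of a set. -/
def recessionCone {n : ℕ} (S : Set (Fin n → ℝ)) : Set (Fin n → ℝ) :=
  {r | ∀ x ∈ S, ∀ t : ℝ, 0 ≤ t → x + t • r ∈ S}

/-- A set is pointed if its recession cone contains no line. -/
def IsPointed {n : ℕ} (S : Set (Fin n → ℝ)) : Prop :=
  ∀ r ∈ recessionCone S, -r ∈ recessionCone S → r = 0

/-- `x` generates an extreme ray of the cone `C`: it is a nonzero element of `C` that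
cannot be written as a sum of two elements of `C` not both parallel to it. -/
def IsExtremeRay {V : Type*} [AddCommGroup V] [Module ℝ V] (C : Set V) (x : V) : Prop :=
  x ∈ C ∧ x ≠ 0 ∧ ∀ y ∈ C, ∀ z ∈ C, x = y + z →
    (∃ t : ℝ, 0 ≤ t ∧ y = t • x) ∧ (∃ t : ℝ, 0 ≤ t ∧ z = t • x)

/-- Affine dimension of a subset of `ℝⁿ`. -/
def affDim {n : ℕ} (S : Set (Fin n → ℝ)) : ℕ :=
  Module.finrank ℝ (affineSpan ℝ S).direction

/-!
The face `F₀` of `P_D⁰` cut out by `α·x ≥ β` is contained in `p⁰ + W`, where `W` is spanned by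
`p¹ - p⁰` and the rays `r ∈ R⁰` with `α·r = 0`: in a point `λp⁰ + (1-λ)p¹ + Σ cᵣ r` of `F₀` every
ray with `α·r > 0` has coefficient zero. Hence `dim W ≥ n - 1`. Conversely `W` lies in the
direction of the face of `P_D`: by nondegeneracy the constraints of `Pᵗ` tight at `pᵗ` are
exactly those defining the basis cone `Cᵗ`, and the others have slack, so `pᵗ + εr ∈ Pᵗ` for
every ray `r` of `Cᵗ` and small `ε > 0`. Validity follows from `Pᵗ ⊆ Cᵗ ⊆ P_D⁰`, and the upper
bound `n - 1` from the face lying in the hyperplane `α·x = β` (or, when `α = 0`, in `aff P_D⁰`).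
-/

open Set Filter Topology Submodule

section Dot

variable {n : ℕ}

theorem dot_add (a x y : Fin n → ℝ) : dot a (x + y) = dot a x + dot a y :=
  dotProduct_add a x y

theorem dot_smul (a : Fin n → ℝ) (c : ℝ) (x : Fin n → ℝ) : dot a (c • x) = c * dot a x :=
  dotProduct_smul c a x

theorem dot_sub (a x y : Fin n → ℝ) : dot a (x - y) = dot a x - dot a y :=
  dotProduct_sub a x y

theorem dot_zero_left (x : Fin n → ℝ) : dot 0 x = 0 :=
  zero_dotProduct x

def dotL (a : Fin n → ℝ) : Module.Dual ℝ (Fin n → ℝ) :=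
  dotProductBilin ℝ ℝ a

@[simp] theorem dotL_apply (a x : Fin n → ℝ) : dotL a x = dot a x := rfl

theorem dotL_ne_zero {a : Fin n → ℝ} (ha : a ≠ 0) : dotL a ≠ 0 := fun h =>
  ha <| dotProduct_self_eq_zero.1 (LinearMap.congr_fun h a)

theorem continuous_dot (a : Fin n → ℝ) : Continuous (dot a) :=
  (dotL a).continuous_of_finiteDimensional

end Dot

section ConeHull

variable {n : ℕ}

theorem subset_coneHull (R : Set (Fin n → ℝ)) : R ⊆ coneHull R := fun v hv =>
  ⟨{v}, fun _ => 1, by simpa using hv, by simp, by simp⟩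

theorem coneHull_mono {R R' : Set (Fin n → ℝ)} (h : R ⊆ R') : coneHull R ⊆ coneHull R' := by
  rintro y ⟨s, c, hs, hc, rfl⟩
  exact ⟨s, c, hs.trans h, hc, rfl⟩

theorem mem_span_of_mem_coneHull_of_dot_eq_zero {α : Fin n → ℝ} {R : Set (Fin n → ℝ)}
    (hR : ∀ v ∈ R, 0 ≤ dot α v) {x : Fin n → ℝ} (hx : x ∈ coneHull R) (hx0 : dot α x = 0) :
    x ∈ span ℝ {v ∈ R | dot α v = 0} := by
  obtain ⟨s, c, hs, hc, rfl⟩ := hx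
  have hterms : ∀ v ∈ s, c v * dot α v = 0 := by
    refine (Finset.sum_eq_zero_iff_of_nonneg fun v hv => mul_nonneg (hc v hv) (hR v (hs hv))).1 ?_
    simpa only [← dotL_apply, map_sum, map_smul, smul_eq_mul] using hx0
  refine sum_mem fun v hv => ?_
  rcases mul_eq_zero.1 (hterms v hv) with hcv | hαv
  · simp [hcv]
  · exact smul_mem _ _ (subset_span ⟨hs hv, hαv⟩)

theorem singleton_add_coneHull_subset_pointRayHull {P R R' : Set (Fin n → ℝ)}
    {p : Fin n → ℝ} (hp : p ∈ P) (hR : R' ⊆ R) : {p} + coneHull R' ⊆ pointRayHull P R :=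
  add_subset_add (singleton_subset_iff.2 (subset_convexHull ℝ P hp)) (coneHull_mono hR)

theorem dot_nonneg_of_supports_pointRayHull {P R : Set (Fin n → ℝ)} {α : Fin n → ℝ} {β : ℝ}
    (hvalid : ∀ x ∈ pointRayHull P R, β ≤ dot α x) {p v : Fin n → ℝ} (hp : p ∈ P)
    (hpβ : dot α p = β) (hv : v ∈ R) : 0 ≤ dot α v := by
  have := hvalid (p + v) (add_mem_add (subset_convexHull ℝ P hp) (subset_coneHull R hv))
  rw [dot_add, hpβ] at this
  linarith

theorem direction_affineSpan_pointRayHull_inter_le {p₀ p₁ : Fin n → ℝ} {R : Set (Fin n → ℝ)}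
    {α : Fin n → ℝ} {β : ℝ} (hR : ∀ v ∈ R, 0 ≤ dot α v) (h₀ : dot α p₀ = β)
    (h₁ : dot α p₁ = β) :
    (affineSpan ℝ (pointRayHull {p₀, p₁} R ∩ {x | dot α x = β})).direction ≤
      span ℝ ({p₁ - p₀} ∪ {v ∈ R | dot α v = 0}) := by
  set W := span ℝ ({p₁ - p₀} ∪ {v ∈ R | dot α v = 0})
  suffices h : pointRayHull {p₀, p₁} R ∩ {x | dot α x = β} ⊆ AffineSubspace.mk' p₀ W by
    simpa using AffineSubspace.direction_le (affineSpan_le.2 h)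
  rintro _ ⟨hx, hxβ⟩
  obtain ⟨q, hq, y, hy, rfl⟩ := hx
  rw [convexHull_pair] at hq
  obtain ⟨a, b, -, -, hab, rfl⟩ := hq
  have hy0 : dot α y = 0 := by
    have : dot α (a • p₀ + b • p₁ + y) = β := hxβ
    rw [dot_add, dot_add, dot_smul, dot_smul, h₀, h₁] at this
    linear_combination this - β * hab
  have hdiff : a • p₀ + b • p₁ + y -ᵥ p₀ = b • (p₁ - p₀) + y := by
    rw [vsub_eq_sub, eq_sub_of_add_eq hab]
    module
  change a • p₀ + b • p₁ + y ∈ AffineSubspace.mk' p₀ W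
  rw [AffineSubspace.mem_mk', hdiff]
  exact add_mem (smul_mem _ _ (subset_span (Or.inl rfl)))
    (span_mono subset_union_right (mem_span_of_mem_coneHull_of_dot_eq_zero hR hy hy0))

end ConeHull

section Polyhedron

variable {n : ℕ} {ι : Type*} [Finite ι] {A : ι → Fin n → ℝ} {b : ι → ℝ} {p : Fin n → ℝ}

theorem exists_pos_add_smul_mem_of_dot_nonneg_of_tight {d : Fin n → ℝ}
    (hp : ∀ i, b i ≤ dot (A i) p) (hd : ∀ i, dot (A i) p = b i → 0 ≤ dot (A i) d) :
    ∃ ε : ℝ, 0 < ε ∧ ∀ i, b i ≤ dot (A i) (p + ε • d) := by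
  have h : ∀ᶠ ε in 𝓝[>] (0 : ℝ), ∀ i, b i ≤ dot (A i) (p + ε • d) := by
    refine eventually_all.2 fun i => ?_
    simp only [dot_add, dot_smul]
    rcases (hp i).eq_or_lt with htight | hslack
    · filter_upwards [self_mem_nhdsWithin] with ε hε
      nlinarith [hd i htight.symm, mem_Ioi.1 hε]
    · have hlim : Tendsto (fun ε : ℝ => dot (A i) p + ε * dot (A i) d) (𝓝[>] 0)
          (𝓝 (dot (A i) p)) :=
        ((continuous_const.add (continuous_id.mul continuous_const)).tendsto' 0 _
          (by simp)).mono_left nhdsWithin_le_nhds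
      exact (hlim.eventually_const_lt hslack).mono fun _ => le_of_lt
  obtain ⟨ε, hε, hεpos⟩ := (h.and self_mem_nhdsWithin).exists
  exact ⟨ε, hεpos, hε⟩

theorem exists_pos_add_smul_mem_of_mem_basisCone {κ : Type*} {e : κ → ι}
    {R : Set (Fin n → ℝ)} (hp : ∀ i, b i ≤ dot (A i) p)
    (htight : ∀ i, dot (A i) p = b i ↔ i ∈ range e)
    (hcone : {p} + coneHull R = {x | ∀ j, b (e j) ≤ dot (A (e j)) x})
    {v : Fin n → ℝ} (hv : v ∈ R) : ∃ ε : ℝ, 0 < ε ∧ ∀ i, b i ≤ dot (A i) (p + ε • v) := by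
  refine exists_pos_add_smul_mem_of_dot_nonneg_of_tight hp fun i hi => ?_
  obtain ⟨j, rfl⟩ := (htight i).1 hi
  have hpv : p + v ∈ ({p} + coneHull R : Set (Fin n → ℝ)) :=
    add_mem_add rfl (subset_coneHull R hv)
  rw [hcone] at hpv
  have := hpv j
  rw [dot_add, hi] at this
  linarith

end Polyhedron

section AffDim

variable {n : ℕ}

theorem mem_direction_affineSpan_of_add_smul_mem {k V : Type*} [Field k] [AddCommGroup V]
    [Module k V] {S : Set V} {p v : V} {ε : k} (hp : p ∈ S) (hpv : p + ε • v ∈ S)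
    (hε : ε ≠ 0) : v ∈ (affineSpan k S).direction := by
  have := vsub_mem_vectorSpan k hpv hp
  rw [vsub_eq_sub, add_sub_cancel_left] at this
  exact (smul_mem_iff _ hε).1 (direction_affineSpan k S ▸ this)

theorem span_le_direction_affineSpan {k V : Type*} [Field k] [AddCommGroup V] [Module k V]
    {S D : Set V} {p₀ p₁ : V} (h₀ : p₀ ∈ S) (h₁ : p₁ ∈ S)
    (hD : ∀ v ∈ D, ∃ q ∈ S, ∃ ε : k, ε ≠ 0 ∧ q + ε • v ∈ S) :
    span k ({p₁ - p₀} ∪ D) ≤ (affineSpan k S).direction := by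
  refine span_le.2 ?_
  rintro v (rfl | hv)
  · rw [direction_affineSpan]
    exact vsub_mem_vectorSpan k h₁ h₀
  · obtain ⟨q, hq, ε, hε, hqv⟩ := hD v hv
    exact mem_direction_affineSpan_of_add_smul_mem hq hqv hε

theorem affDim_mono {S T : Set (Fin n → ℝ)} (h : S ⊆ T) : affDim S ≤ affDim T :=
  Submodule.finrank_mono (AffineSubspace.direction_le (affineSpan_mono ℝ h))

theorem affDim_closure_convexHull_le {S T : Set (Fin n → ℝ)} (h : S ⊆ T) :
    affDim (closure (convexHull ℝ S)) ≤ affDim T := by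
  have hsub : closure (convexHull ℝ S) ⊆ affineSpan ℝ T :=
    closure_minimal (convexHull_min (h.trans (subset_affineSpan ℝ T)) (affineSpan ℝ T).convex)
      (AffineSubspace.closed_of_finiteDimensional _)
  have := affDim_mono hsub
  rwa [affDim, affDim, AffineSubspace.affineSpan_coe] at this

theorem affDim_le_of_subset_hyperplane {α : Fin n → ℝ} {β : ℝ} {S : Set (Fin n → ℝ)}
    (hα : α ≠ 0) (hS : S ⊆ {x | dot α x = β}) : affDim S ≤ n - 1 := by
  have hker : (affineSpan ℝ S).direction ≤ LinearMap.ker (dotL α) := by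
    rw [direction_affineSpan, vectorSpan_def, span_le]
    rintro _ ⟨x, hx, y, hy, rfl⟩
    change dot α (x - y) = 0
    rw [dot_sub, (hS hx : dot α x = β), (hS hy : dot α y = β), sub_self]
  have hrank := Module.Dual.finrank_ker_add_one_of_ne_zero (dotL_ne_zero hα)
  rw [Module.finrank_fin_fun] at hrank
  exact (Submodule.finrank_mono hker).trans (by omega)

theorem forall_le_dot_of_closure_convexHull {S : Set (Fin n → ℝ)} {α : Fin n → ℝ} {β : ℝ}
    (h : ∀ x ∈ S, β ≤ dot α x) : ∀ x ∈ closure (convexHull ℝ S), β ≤ dot α x :=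
  closure_minimal (convexHull_min h (convex_halfSpace_ge (dotL α).isLinear β))
    (isClosed_le continuous_const (continuous_dot α))

end AffDim

theorem stmt_7_general {n : ℕ}
    (Pt : Fin 2 → Set (Fin n → ℝ))
    (m : Fin 2 → ℕ) (A : ∀ t, Fin (m t) → (Fin n → ℝ)) (b : ∀ t, Fin (m t) → ℝ)
    (hrep : ∀ t, Pt t = {x | ∀ i, b t i ≤ dot (A t i) x})
    (p : Fin 2 → (Fin n → ℝ))
    (hvert : ∀ t, p t ∈ Set.extremePoints ℝ (Pt t))
    (e : ∀ t, Fin n → Fin (m t))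
    (htightset : ∀ t i, dot (A t i) (p t) = b t i ↔ i ∈ Set.range (e t))
    (r : Fin 2 → Fin n → (Fin n → ℝ))
    (hbasiscone : ∀ t, ({p t} + coneHull (Set.range (r t)) : Set (Fin n → ℝ)) =
      {x | ∀ j, b t (e t j) ≤ dot (A t (e t j)) x})
    (PD0 : Set (Fin n → ℝ))
    (hPD0 : PD0 = convexHull ℝ {p 0, p 1} + coneHull (⋃ t, Set.range (r t)))
    (α : Fin n → ℝ) (β : ℝ)
    (hvalid0 : ∀ x ∈ PD0, β ≤ dot α x)
    (hfacet0 : affDim (PD0 ∩ {x | dot α x = β}) = n - 1)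
    (htight0 : dot α (p 0) = β) (htight1 : dot α (p 1) = β) :
    (∀ x ∈ closure (convexHull ℝ (Pt 0 ∪ Pt 1)), β ≤ dot α x) ∧
      affDim (closure (convexHull ℝ (Pt 0 ∪ Pt 1)) ∩ {x | dot α x = β}) = n - 1 := by
  set H := {x | dot α x = β}
  have hmem : ∀ t x, x ∈ Pt t ↔ ∀ i, b t i ≤ dot (A t i) x := fun t x => by rw [hrep t]; rfl
  have hβ : ∀ t, dot α (p t) = β := Fin.forall_fin_two.2 ⟨htight0, htight1⟩
  have hPt_union : ∀ t, Pt t ⊆ Pt 0 ∪ Pt 1 :=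
    Fin.forall_fin_two.2 ⟨subset_union_left, subset_union_right⟩
  have hPtPD0 : ∀ t, Pt t ⊆ PD0 := fun t x hx => by
    have hp : p t ∈ ({p 0, p 1} : Set (Fin n → ℝ)) := by fin_cases t <;> simp
    rw [hPD0]
    refine singleton_add_coneHull_subset_pointRayHull hp (subset_iUnion (fun t => range (r t)) t) ?_
    exact hbasiscone t ▸ fun j => (hmem t x).1 hx (e t j)
  have hunion : Pt 0 ∪ Pt 1 ⊆ PD0 := union_subset (hPtPD0 0) (hPtPD0 1)
  have hvalid := forall_le_dot_of_closure_convexHull fun x hx => hvalid0 x (hunion hx)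
  refine ⟨hvalid, le_antisymm ?_ ?_⟩
  · by_cases hα : α = 0
    · have hH : H = univ := by ext; simp [H, hα, dot_zero_left, ← htight0]
      rw [hH, inter_univ] at hfacet0 ⊢
      exact hfacet0 ▸ affDim_closure_convexHull_le hunion
    · exact affDim_le_of_subset_hyperplane hα inter_subset_right
  have hpF : ∀ t, p t ∈ closure (convexHull ℝ (Pt 0 ∪ Pt 1)) ∩ H := fun t =>
    ⟨subset_closure (subset_convexHull ℝ _ (hPt_union t (hvert t).1)), hβ t⟩
  have hspan := span_le_direction_affineSpan (hpF 0) (hpF 1)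
    (D := {v ∈ ⋃ t, range (r t) | dot α v = 0}) fun v ⟨hv, hv0⟩ => by
      obtain ⟨t, ht⟩ := mem_iUnion.1 hv
      obtain ⟨ε, hε, hεv⟩ := exists_pos_add_smul_mem_of_mem_basisCone
        ((hmem t _).1 (hvert t).1) (htightset t) (hbasiscone t) ht
      refine ⟨p t, hpF t, ε, hε.ne',
        subset_closure (subset_convexHull ℝ _ (hPt_union t ((hmem t _).2 hεv))), ?_⟩
      change dot α (p t + ε • v) = β
      rw [dot_add, dot_smul, hv0, mul_zero, add_zero, hβ t]
  have hrays : ∀ v ∈ ⋃ t, range (r t), 0 ≤ dot α v := fun v hv =>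
    dot_nonneg_of_supports_pointRayHull (hPD0 ▸ hvalid0) (mem_insert _ _) htight0 hv
  have hface := direction_affineSpan_pointRayHull_inter_le hrays htight0 htight1
  rw [pointRayHull, ← hPD0] at hface
  exact hfacet0 ▸ Submodule.finrank_mono (hface.trans hspan)

/-- Split disjunction with terms `P⁰ = P ∩ {π·x ≤ π₀}`, `P¹ = P ∩ {π·x ≥ π₀+1}`,
`c`-optimal vertices `pᵗ` with unique nondegenerate bases (exactly `n` tight constraints with
linearly independent normals) and basis cones `Cᵗ = pᵗ + cone(r^{t,1},…,r^{t,n})`. Every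
facet-defining inequality of the simple point-ray hull `P_D⁰ = conv({p⁰,p¹}) + cone(R⁰)` that is
tight at both `p⁰` and `p¹` is facet-defining for the disjunctive hull
`P_D = cl conv(P⁰ ∪ P¹)`. -/
theorem stmt_7 {n : ℕ} (P : Set (Fin n → ℝ)) (hpoly : IsPolyhedron P)
    (pi : Fin n → ℝ) (pi0 : ℝ)
    (Pt : Fin 2 → Set (Fin n → ℝ))
    (hsplit0 : Pt 0 = {x ∈ P | dot pi x ≤ pi0})
    (hsplit1 : Pt 1 = {x ∈ P | pi0 + 1 ≤ dot pi x})
    (hpointed : ∀ t, IsPointed (Pt t))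
    (c : Fin n → ℝ)
    (m : Fin 2 → ℕ) (A : ∀ t, Fin (m t) → (Fin n → ℝ)) (b : ∀ t, Fin (m t) → ℝ)
    (hrep : ∀ t, Pt t = {x | ∀ i, b t i ≤ dot (A t i) x})
    (p : Fin 2 → (Fin n → ℝ))
    (hvert : ∀ t, p t ∈ Set.extremePoints ℝ (Pt t))
    (hopt : ∀ t, ∀ x ∈ Pt t, dot c (p t) ≤ dot c x)
    (e : ∀ t, Fin n → Fin (m t)) (hinj : ∀ t, Function.Injective (e t))
    (htightset : ∀ t i, dot (A t i) (p t) = b t i ↔ i ∈ Set.range (e t))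
    (hnormindep : ∀ t, LinearIndependent ℝ (fun j => A t (e t j)))
    (r : Fin 2 → Fin n → (Fin n → ℝ))
    (hbasiscone : ∀ t, ({p t} + coneHull (Set.range (r t)) : Set (Fin n → ℝ)) =
      {x | ∀ j, b t (e t j) ≤ dot (A t (e t j)) x})
    (PD0 : Set (Fin n → ℝ))
    (hPD0 : PD0 = convexHull ℝ {p 0, p 1} + coneHull (⋃ t, Set.range (r t)))
    (α : Fin n → ℝ) (β : ℝ)
    (hvalid0 : ∀ x ∈ PD0, β ≤ dot α x)
    (hfacet0 : affDim (PD0 ∩ {x | dot α x = β}) = n - 1)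
    (htight0 : dot α (p 0) = β) (htight1 : dot α (p 1) = β) :
    (∀ x ∈ closure (convexHull ℝ (Pt 0 ∪ Pt 1)), β ≤ dot α x) ∧
      affDim (closure (convexHull ℝ (Pt 0 ∪ Pt 1)) ∩ {x | dot α x = β}) = n - 1 :=
  stmt_7_general Pt m A b hrep p hvert e htightset r hbasiscone PD0 hPD0 α β hvalid0 hfacet0 htight0
    htight1
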